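/- arXiv:2001.03188 — 6 statements merged into one kernel-verified Lean document; each statement's English description precedes it below -/
import Mathlib

section
/- Let n be a natural number with n ≥ 2. There exists an n-generated selfdual lattice that has no atom if and only if n ≥ 4. -/
/-- A set has exactly two elements. -/
def TwoElem {α : Type*} (s : Set α) : Prop := ∃ x y : α, x ≠ y ∧ s = {x, y}

/-- `a` is an atom of the lattice `L`: the principal ideal `↓a` has exactly two elements. -/
def IsAtomOf {L : Type*} [Lattice L] (a : L) : Prop := TwoElem (Set.Iic a)

/-- `G` generates the lattice `L`: `G` is contained in no proper sublattice, that is,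
the sublattice generated by `G` is all of `L`. -/
def GeneratesLat {L : Type*} [Lattice L] (G : Set L) : Prop :=
  latticeClosure G = Set.univ

/-- A lattice is selfdual if it admits a dual automorphism, i.e. an order-reversing
bijection of the lattice onto itself. -/
def IsSelfdual (L : Type*) [Lattice L] : Prop :=
  ∃ f : L ≃ L, ∀ x y : L, x ≤ y ↔ f y ≤ f x

/-!
If a lattice is generated by `x, y, z`, the sublattice `↑(x ⊓ y) ∪ ↓z` contains the generators, so
every element lies above `x ⊓ y` or below `z`. Hence `↓(x ⊓ y) = {x ⊓ y ⊓ z, x ⊓ y}`, and in the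
absence of atoms every pairwise meet of generators is the least element `x ⊓ y ⊓ z`. Selfduality
gives the dual statement for joins, so the lattice is `{⊥, x, y, z, ⊤}`: finite, hence with an atom.
Two generators are the case `z = y`.

For `n ≥ 4` one uses an infinite selfdual lattice generated by `A, B, A', B'`, atomless because
every nonzero element lies above one of the infinite descending chains `T m`. These chains are
generated through `T (k + 3) = g ⊓ (T (k + 1) ⊔ T (k + 2))` for a generator `g` chosen by `k % 3`,
and adding elements `V k` to the generators reaches any `n ≥ 4`.
-/

section

variable {L : Type*} [Lattice L]

lemma isAtomOf_iff_isAtom [OrderBot L] {a : L} : IsAtomOf a ↔ IsAtom a := by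
  refine ⟨fun h => ?_, fun h => ⟨⊥, a, h.1.symm, h.Iic_eq⟩⟩
  have hcard : (Set.Iic a).encard = 2 := Set.encard_eq_two.2 h
  have hne : a ≠ ⊥ := by
    rintro rfl
    simp at hcard
  have hIic : {⊥, a} = Set.Iic a := (Set.toFinite _).eq_of_subset_of_encard_le
    (by simp [Set.insert_subset_iff]) (by rw [hcard, Set.encard_pair hne.symm])
  refine ⟨hne, fun b hb => ?_⟩
  have hb' : b ∈ Set.Iic a := hb.le
  rw [← hIic] at hb'
  exact hb'.resolve_right hb.ne

lemma exists_isAtomOf_of_finite [Finite L] [Nontrivial L] : ∃ a : L, IsAtomOf a := by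
  have := Fintype.ofFinite L
  let _ : BoundedOrder L := Fintype.toBoundedOrder L
  obtain ⟨a, ha⟩ := IsAtomic.exists_atom (α := L)
  exact ⟨a, isAtomOf_iff_isAtom.2 ha⟩

lemma TwoElem.image {α β : Type*} {s : Set α} (h : TwoElem s) {f : α → β}
    (hf : Function.Injective f) : TwoElem (f '' s) := by
  obtain ⟨x, y, hxy, rfl⟩ := h
  exact ⟨f x, f y, hf.ne hxy, Set.image_pair f x y⟩

lemma IsAtomOf.map {M : Type*} [Lattice M] {a : L} (h : IsAtomOf a) (e : L ≃o M) :
    IsAtomOf (e a) := by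
  rw [IsAtomOf, ← e.image_Iic]
  exact TwoElem.image h e.injective

lemma IsSelfdual.nonempty_orderIso (h : IsSelfdual L) : Nonempty (L ≃o Lᵒᵈ) := by
  obtain ⟨f, hf⟩ := h
  exact ⟨{ f.trans OrderDual.toDual with map_rel_iff' := (hf _ _).symm }⟩

lemma isSublattice_Ici_union_Iic (a b : L) : IsSublattice (Set.Ici a ∪ Set.Iic b) where
  supClosed := by
    rintro x (hx | hx) y (hy | hy)
    exacts [.inl (le_sup_of_le_left hx), .inl (le_sup_of_le_left hx), .inl (le_sup_of_le_right hy),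
      .inr (sup_le hx hy)]
  infClosed := by
    rintro x (hx | hx) y (hy | hy)
    exacts [.inl (le_inf hx hy), .inr (inf_le_of_right_le hy), .inr (inf_le_of_left_le hx),
      .inr (inf_le_of_left_le hx)]

lemma isSublattice_Ici (a : L) : IsSublattice (Set.Ici a) where
  supClosed _ hx _ _ := le_sup_of_le_left hx
  infClosed _ hx _ hy := le_inf hx hy

lemma GeneratesLat.mem {G S : Set L} (hG : GeneratesLat G) (hS : IsSublattice S) (hGS : G ⊆ S)
    (u : L) : u ∈ S :=
  latticeClosure_min hGS hS (hG ▸ Set.mem_univ u)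

lemma GeneratesLat.dual {G : Set L} (hG : GeneratesLat G) :
    GeneratesLat (OrderDual.ofDual ⁻¹' G) := by
  rw [GeneratesLat, ← ofDual_preimage_latticeClosure, hG, Set.preimage_univ]

lemma GeneratesLat.isAtomOf_inf {x y z : L} (hG : GeneratesLat {x, y, z})
    (hne : x ⊓ y ⊓ z ≠ x ⊓ y) : IsAtomOf (x ⊓ y) := by
  have hsplit : ∀ u, u ∈ Set.Ici (x ⊓ y) ∪ Set.Iic z :=
    hG.mem (isSublattice_Ici_union_Iic _ _) (by simp [Set.insert_subset_iff])
  have hbot : ∀ u, u ∈ Set.Ici (x ⊓ y ⊓ z) :=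
    hG.mem (isSublattice_Ici _) (by simp [Set.insert_subset_iff, inf_le_of_left_le])
  refine ⟨x ⊓ y ⊓ z, x ⊓ y, hne, Set.ext fun u => ⟨fun hu => ?_, ?_⟩⟩
  · rcases hsplit u with h | h
    · exact .inr (le_antisymm hu h)
    · exact .inl (le_antisymm (le_inf hu h) (hbot u))
  · rintro (rfl | rfl)
    exacts [inf_le_left, le_rfl]

lemma GeneratesLat.inf_inf_eq {x y z : L} (hG : GeneratesLat {x, y, z})
    (hat : ∀ a : L, ¬IsAtomOf a) : x ⊓ y ⊓ z = x ⊓ y :=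
  by_contra fun hne => hat _ (hG.isAtomOf_inf hne)

lemma isSublattice_pairwise_inf_sup {m x y z J : L} (hxy : x ⊓ y = m) (hxz : x ⊓ z = m)
    (hyz : y ⊓ z = m) (hxy' : x ⊔ y = J) (hxz' : x ⊔ z = J) (hyz' : y ⊔ z = J) :
    IsSublattice {m, x, y, z, J} := by
  have hmx : m ≤ x := hxy ▸ inf_le_left
  have hmy : m ≤ y := hxy ▸ inf_le_right
  have hmz : m ≤ z := hxz ▸ inf_le_right
  have hxJ : x ≤ J := hxy' ▸ le_sup_left
  have hyJ : y ≤ J := hxy' ▸ le_sup_right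
  have hzJ : z ≤ J := hxz' ▸ le_sup_right
  have hmJ : m ≤ J := hmx.trans hxJ
  have hyx : y ⊓ x = m := inf_comm y x ▸ hxy
  have hzx : z ⊓ x = m := inf_comm z x ▸ hxz
  have hzy : z ⊓ y = m := inf_comm z y ▸ hyz
  have hyx' : y ⊔ x = J := sup_comm y x ▸ hxy'
  have hzx' : z ⊔ x = J := sup_comm z x ▸ hxz'
  have hzy' : z ⊔ y = J := sup_comm z y ▸ hyz'
  constructor <;> rintro a ha b hb <;>
    simp only [Set.mem_insert_iff, Set.mem_singleton_iff] at ha hb <;> rcases ha with rfl | rfl | rfl | rfl | rfl <;> rcases hb with rfl | rfl | rfl | rfl | rfl <;>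
    simp [*]

lemma exists_isAtomOf_of_generates_triple {x y z : L} (hxy : x ≠ y)
    (hG : GeneratesLat {x, y, z}) (hsd : IsSelfdual L) : ∃ a : L, IsAtomOf a := by
  by_contra! hat
  obtain ⟨e⟩ := hsd.nonempty_orderIso
  have hatD : ∀ a : Lᵒᵈ, ¬IsAtomOf a := fun a ha => hat _ (ha.map e.symm)
  have hG₂ : GeneratesLat {x, z, y} := by rwa [Set.pair_comm]
  have hG₃ : GeneratesLat {y, z, x} := by rwa [Set.pair_comm, Set.insert_comm, Set.pair_comm]
  have hsup {u v w : L} (h : GeneratesLat {u, v, w}) : u ⊔ v ⊔ w = u ⊔ v :=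
    h.dual.inf_inf_eq hatD
  have hS := isSublattice_pairwise_inf_sup (hG.inf_inf_eq hat).symm
    (by rw [← hG₂.inf_inf_eq hat, inf_right_comm])
    (by rw [← hG₃.inf_inf_eq hat, inf_comm, inf_assoc])
    (hsup hG).symm (by rw [← hsup hG₂, sup_right_comm]) (by rw [← hsup hG₃, sup_comm, sup_assoc])
  have : Finite L := Set.finite_univ_iff.1 <| (Set.toFinite _).subset fun u _ =>
    hG.mem hS (by simp [Set.insert_subset_iff]) u
  have : Nontrivial L := nontrivial_of_ne x y hxy
  obtain ⟨a, ha⟩ := exists_isAtomOf_of_finite (L := L)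
  exact hat a ha

lemma exists_isAtomOf_of_generates_of_ncard_le_three {G : Set L} (hG : GeneratesLat G)
    (hsd : IsSelfdual L) (h₂ : 2 ≤ G.ncard) (h₃ : G.ncard ≤ 3) : ∃ a : L, IsAtomOf a := by
  obtain ⟨x, y, z, hxy, rfl⟩ : ∃ x y z, x ≠ y ∧ G = {x, y, z} := by
    obtain h | h : G.ncard = 2 ∨ G.ncard = 3 := by omega
    · obtain ⟨x, y, hxy, rfl⟩ := Set.ncard_eq_two.1 h
      exact ⟨x, y, y, hxy, by rw [Set.pair_eq_singleton]⟩
    · obtain ⟨x, y, z, hxy, -, -, rfl⟩ := Set.ncard_eq_three.1 h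
      exact ⟨x, y, z, hxy, rfl⟩
  exact exists_isAtomOf_of_generates_triple hxy hG hsd

end

/-- `T m` (`m ∈ ℕ`) form three descending chains, one for each residue of `m` mod 3, lying below
`A`, `B`, `B'` respectively; `V k = T k ⊔ T (k + 1)` form a descending chain, and `A'` lies above
all `T m` and `V k`. The primed elements are the duals of the unprimed ones. -/
inductive AtomlessSelfdual : Type
  | bot | top | A | B | A' | B'
  | T (m : ℕ) | V (k : ℕ) | T' (m : ℕ) | V' (k : ℕ)
  deriving DecidableEq

namespace AtomlessSelfdual

/-- The least `l ≥ k` with `l % 3 = i`, for `i < 3`. -/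
def nextMod3 (i k : ℕ) : ℕ := k + (i + 3 - k % 3) % 3

def le : AtomlessSelfdual → AtomlessSelfdual → Prop
  | bot, _ => True
  | _, top => True
  | A, A => True
  | A, T' _ => True
  | A, V' _ => True
  | B, B => True
  | B, T' l => l % 3 = 2
  | T m, A => m % 3 = 0
  | T m, B => m % 3 = 1
  | T m, B' => m % 3 = 2
  | T m, T m' => m = m' ∨ (m % 3 = m' % 3 ∧ m' ≤ m)
  | T m, V k => k ≤ m
  | T _, A' => True
  | T _, T' _ => True
  | T _, V' _ => True
  | V k, V j => j ≤ k
  | V _, A' => True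
  | V _, T' _ => True
  | V _, V' _ => True
  | A', A' => True
  | A', T' l => l % 3 = 0
  | B', B' => True
  | B', T' l => l % 3 = 1
  | T' l, T' l' => l = l' ∨ (l % 3 = l' % 3 ∧ l ≤ l')
  | V' j, V' j' => j ≤ j'
  | V' j, T' l => j ≤ l
  | _, _ => False

instance : LE AtomlessSelfdual := ⟨le⟩

lemma le_def (x y : AtomlessSelfdual) : (x ≤ y) = le x y := rfl

instance : PartialOrder AtomlessSelfdual where
  le_refl x := by cases x <;> simp [le_def, le]
  le_trans x y z hxy hyz := by
    cases x <;> cases y <;> cases z <;> simp only [le_def, le] at hxy hyz ⊢ <;> omega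
  le_antisymm x y hxy hyx := by
    cases x <;> cases y <;>
      simp only [le_def, le, T.injEq, V.injEq, T'.injEq, V'.injEq] at hxy hyx ⊢ <;> omega

def inf : AtomlessSelfdual → AtomlessSelfdual → AtomlessSelfdual
  | bot, _ => bot
  | _, bot => bot
  | top, y => y
  | x, top => x
  | A, A => A
  | A, B => bot
  | A, A' => T 0
  | A, B' => bot
  | A, T m => if m % 3 = 0 then T m else bot
  | A, V k => T (nextMod3 0 k)
  | A, T' _ => A
  | A, V' _ => A
  | B, A => bot
  | B, B => B
  | B, A' => T 1
  | B, B' => bot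
  | B, T m => if m % 3 = 1 then T m else bot
  | B, V k => T (nextMod3 1 k)
  | B, T' l => if l % 3 = 2 then B else T 1
  | B, V' _ => T 1
  | A', A => T 0
  | A', B => T 1
  | A', A' => A'
  | A', B' => T 2
  | A', T m => T m
  | A', V k => V k
  | A', T' l => if l % 3 = 0 then A' else V 0
  | A', V' _ => V 0
  | B', A => bot
  | B', B => bot
  | B', A' => T 2
  | B', B' => B'
  | B', T m => if m % 3 = 2 then T m else bot
  | B', V k => T (nextMod3 2 k)
  | B', T' l => if l % 3 = 1 then B' else T 2
  | B', V' _ => T 2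
  | T m, A => if m % 3 = 0 then T m else bot
  | T m, B => if m % 3 = 1 then T m else bot
  | T m, A' => T m
  | T m, B' => if m % 3 = 2 then T m else bot
  | T m, T m' => if m % 3 = m' % 3 then T (max m m') else bot
  | T m, V k => if k ≤ m then T m else T (nextMod3 (m % 3) k)
  | T m, T' _ => T m
  | T m, V' _ => T m
  | V k, A => T (nextMod3 0 k)
  | V k, B => T (nextMod3 1 k)
  | V k, A' => V k
  | V k, B' => T (nextMod3 2 k)
  | V k, T m => if k ≤ m then T m else T (nextMod3 (m % 3) k)
  | V k, V j => V (max k j)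
  | V k, T' _ => V k
  | V k, V' _ => V k
  | T' _, A => A
  | T' l, B => if l % 3 = 2 then B else T 1
  | T' l, A' => if l % 3 = 0 then A' else V 0
  | T' l, B' => if l % 3 = 1 then B' else T 2
  | T' _, T m => T m
  | T' _, V k => V k
  | T' l, T' l' => if l % 3 = l' % 3 then T' (min l l') else V' (min l l')
  | T' l, V' j => V' (min l j)
  | V' _, A => A
  | V' _, B => T 1
  | V' _, A' => V 0
  | V' _, B' => T 2
  | V' _, T m => T m
  | V' _, V k => V k
  | V' j, T' l => V' (min l j)
  | V' j, V' j' => V' (min j j')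

protected lemma inf_le_left (x y : AtomlessSelfdual) : inf x y ≤ x := by
  cases x <;> cases y <;> simp only [inf, nextMod3] <;> (try split) <;> simp [le_def, le] <;> omega

protected lemma inf_le_right (x y : AtomlessSelfdual) : inf x y ≤ y := by
  cases x <;> cases y <;> simp only [inf, nextMod3] <;> (try split) <;> simp [le_def, le] <;> omega

protected lemma le_inf {x y z : AtomlessSelfdual} (hx : z ≤ x) (hy : z ≤ y) : z ≤ inf x y := by
  cases z <;> cases x <;> cases y <;> simp only [inf, nextMod3] <;> (try split) <;>
    simp [le_def, le] at hx hy ⊢ <;> omega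

def dual : AtomlessSelfdual → AtomlessSelfdual
  | bot => top
  | top => bot
  | A => A'
  | B => B'
  | A' => A
  | B' => B
  | T m => T' m
  | V k => V' k
  | T' m => T m
  | V' k => V k

@[simp] lemma dual_dual (x : AtomlessSelfdual) : dual (dual x) = x := by cases x <;> rfl

@[simp] lemma dual_le_dual {x y : AtomlessSelfdual} : dual x ≤ dual y ↔ y ≤ x := by
  cases x <;> cases y <;> simp only [le_def, le, dual] <;> omega

instance : Lattice AtomlessSelfdual where
  inf := inf
  sup x y := dual (inf (dual x) (dual y))
  inf_le_left := AtomlessSelfdual.inf_le_left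
  inf_le_right := AtomlessSelfdual.inf_le_right
  le_inf _ _ _ := AtomlessSelfdual.le_inf
  le_sup_left x y := by simpa using dual_le_dual.2 (AtomlessSelfdual.inf_le_left (dual x) (dual y))
  le_sup_right x y := by
    simpa using dual_le_dual.2 (AtomlessSelfdual.inf_le_right (dual x) (dual y))
  sup_le x y z hx hy := by
    simpa using dual_le_dual.2 (AtomlessSelfdual.le_inf (dual_le_dual.2 hx) (dual_le_dual.2 hy))

instance : OrderBot AtomlessSelfdual where
  bot := bot
  bot_le _ := trivial

lemma isSelfdual : IsSelfdual AtomlessSelfdual :=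
  ⟨⟨dual, dual, dual_dual, dual_dual⟩, fun _ _ => dual_le_dual.symm⟩

def below : AtomlessSelfdual → AtomlessSelfdual
  | bot => bot
  | top => A
  | A => T 0
  | B => T 1
  | A' => T 0
  | B' => T 2
  | T m => T (m + 3)
  | V k => T k
  | T' _ => V 0
  | V' _ => V 0

lemma bot_lt_below_lt {x : AtomlessSelfdual} (hx : x ≠ ⊥) : ⊥ < below x ∧ below x < x := by
  cases x
  case bot => exact absurd rfl hx
  all_goals simp [lt_iff_le_and_ne, le_def, le, below]

lemma not_isAtomOf (x : AtomlessSelfdual) : ¬IsAtomOf x := by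
  rw [isAtomOf_iff_isAtom]
  intro hx
  obtain ⟨h₁, h₂⟩ := bot_lt_below_lt hx.1
  exact h₁.ne' (hx.2 _ h₂)

lemma dual_sup (x y : AtomlessSelfdual) : dual (x ⊔ y) = dual x ⊓ dual y :=
  dual_dual (inf (dual x) (dual y))

lemma dual_inf (x y : AtomlessSelfdual) : dual (x ⊓ y) = dual x ⊔ dual y := by
  show dual (inf x y) = dual (inf (dual (dual x)) (dual (dual y)))
  simp

lemma sup_T_T (k : ℕ) : T k ⊔ T (k + 1) = V k := by
  show dual (inf (T' k) (T' (k + 1))) = V k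
  simp only [inf, if_neg (show k % 3 ≠ (k + 1) % 3 by omega), min_eq_left k.le_succ, dual]

lemma exists_inf_V_eq_T (n : ℕ) :
    ∃ g ∈ ({A, B, B'} : Set AtomlessSelfdual), g ⊓ V (n + 1) = T (n + 3) := by
  rcases (by omega : n % 3 = 0 ∨ n % 3 = 1 ∨ n % 3 = 2) with h | h | h
  · exact ⟨A, by simp, show T _ = _ by simp only [nextMod3]; congr 1; omega⟩
  · exact ⟨B, by simp, show T _ = _ by simp only [nextMod3]; congr 1; omega⟩
  · exact ⟨B', by simp, show T _ = _ by simp only [nextMod3]; congr 1; omega⟩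

lemma generatesLat_A_B_A'_B' : GeneratesLat ({A, B, A', B'} : Set AtomlessSelfdual) := by
  set S := latticeClosure ({A, B, A', B'} : Set AtomlessSelfdual)
  have hS : IsSublattice S := isSublattice_latticeClosure
  have hgen : ∀ g ∈ ({A, B, A', B'} : Set AtomlessSelfdual), g ∈ S :=
    fun _ hg => subset_latticeClosure hg
  have hT (n : ℕ) : T n ∈ S ∧ T (n + 1) ∈ S ∧ T (n + 2) ∈ S := by
    induction n with
    | zero => exact ⟨hS.infClosed (hgen A (by simp)) (hgen A' (by simp)),
        hS.infClosed (hgen B (by simp)) (hgen A' (by simp)),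
        hS.infClosed (hgen A' (by simp)) (hgen B' (by simp))⟩
    | succ n ih =>
      obtain ⟨g, hg, hgT⟩ := exists_inf_V_eq_T n
      have hg' : g ∈ ({A, B, A', B'} : Set AtomlessSelfdual) := by
        simp only [Set.mem_insert_iff, Set.mem_singleton_iff] at hg ⊢
        tauto
      exact ⟨ih.2.1, ih.2.2,
        hgT ▸ sup_T_T (n + 1) ▸ hS.infClosed (hgen g hg') (hS.supClosed ih.2.1 ih.2.2)⟩
  have hV (k : ℕ) : V k ∈ S := sup_T_T k ▸ hS.supClosed (hT k).1 (hT k).2.1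
  have hbot : bot ∈ S := hS.infClosed (hgen A (by simp)) (hgen B (by simp))
  have hdual {x} (hx : x ∈ S) : dual x ∈ S := by
    have : dual '' S = S := by
      rw [image_latticeClosure' _ _ dual_sup dual_inf]
      congr 1
      ext x
      simp only [Set.image_insert_eq, Set.image_singleton, dual, Set.mem_insert_iff,
        Set.mem_singleton_iff]
      tauto
    exact this ▸ Set.mem_image_of_mem dual hx
  refine Set.eq_univ_of_forall fun x => ?_
  cases x with
  | bot => exact hbot
  | top => exact hdual hbot
  | T m => exact (hT m).1
  | V k => exact hV k
  | T' m => exact hdual (hT m).1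
  | V' k => exact hdual (hV k)
  | _ => exact hgen _ (by simp)

lemma exists_generatesLat_ncard_eq {n : ℕ} (hn : 4 ≤ n) :
    ∃ G : Set AtomlessSelfdual, G.ncard = n ∧ GeneratesLat G := by
  refine ⟨{A, B, A', B'} ∪ V '' Set.Iio (n - 4), ?_, ?_⟩
  · rw [Set.ncard_union_eq, Set.ncard_image_of_injective _ fun _ _ => V.inj, Set.ncard_Iio_nat]
    · have : ({A, B, A', B'} : Set AtomlessSelfdual).ncard = 4 := by
        simp [Set.ncard_insert_of_notMem]
      omega
    · exact Set.disjoint_left.2 fun x hx ⟨k, _, hk⟩ => by subst hk; simp at hx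
  · exact Set.eq_univ_of_univ_subset
      (generatesLat_A_B_A'_B' ▸ latticeClosure_mono Set.subset_union_left)

end AtomlessSelfdual

theorem stmt_1 (n : ℕ) (hn : 2 ≤ n) :
    (∃ (L : Type) (_ : Lattice L) (G : Set L),
        G.ncard = n ∧ GeneratesLat G ∧ IsSelfdual L ∧
        (∀ a : L, ¬ IsAtomOf a)) ↔ 4 ≤ n := by
  constructor
  · rintro ⟨L, _, G, hcard, hG, hsd, hat⟩
    by_contra! h₄
    obtain ⟨a, ha⟩ := exists_isAtomOf_of_generates_of_ncard_le_three hG hsd (hcard ▸ hn) (by omega)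
    exact hat a ha
  · intro h₄
    obtain ⟨G, hcard, hG⟩ := AtomlessSelfdual.exists_generatesLat_ncard_eq h₄
    exact ⟨_, inferInstance, G, hcard, hG, AtomlessSelfdual.isSelfdual,
      AtomlessSelfdual.not_isAtomOf⟩
end

section
/- Let n be a natural number with n ≥ 2. There exists an n-generated lattice that has no atom if and only if n ≥ 3. -/
section LatticeGeneration

variable {L : Type*} [Lattice L]

lemma isSublattice_pair_inf_sup (a b : L) : IsSublattice ({a, b, a ⊓ b, a ⊔ b} : Set L) := by
  constructor <;>
  · rintro x hx y hy
    simp only [Set.mem_insert_iff, Set.mem_singleton_iff] at hx hy ⊢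
    rcases hx with rfl | rfl | rfl | rfl <;> rcases hy with rfl | rfl | rfl | rfl <;>
      simp [sup_comm, inf_comm]

lemma latticeClosure_pair_subset (a b : L) :
    latticeClosure {a, b} ⊆ ({a, b, a ⊓ b, a ⊔ b} : Set L) :=
  latticeClosure_min (by grind) (isSublattice_pair_inf_sup a b)

lemma Iic_eq_of_generatesLat_pair {a b : L} (hgen : GeneratesLat {a, b}) (hab : ¬ a ≤ b) :
    Set.Iic a = {a ⊓ b, a} := by
  ext x
  have hx := latticeClosure_pair_subset a b (hgen ▸ Set.mem_univ x)
  simp only [Set.mem_Iic, Set.mem_insert_iff, Set.mem_singleton_iff] at hx ⊢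
  constructor
  · rintro hxa
    rcases hx with rfl | rfl | rfl | rfl
    · exact .inr rfl
    · exact .inl (inf_eq_right.mpr hxa).symm
    · exact .inl rfl
    · exact .inr (sup_eq_left.mpr (le_sup_right.trans hxa))
  · rintro (rfl | rfl)
    · exact inf_le_left
    · exact le_rfl

lemma isAtomOf_of_generatesLat_pair {a b : L} (hgen : GeneratesLat {a, b}) (hab : ¬ a ≤ b) :
    IsAtomOf a :=
  ⟨a ⊓ b, a, fun h => hab (inf_eq_left.mp h), Iic_eq_of_generatesLat_pair hgen hab⟩

lemma exists_isAtomOf_of_generatesLat_pair {a b : L} (hab : a ≠ b) (hgen : GeneratesLat {a, b}) :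
    ∃ c : L, IsAtomOf c := by
  by_cases hle : a ≤ b
  · rw [Set.pair_comm] at hgen
    exact ⟨b, isAtomOf_of_generatesLat_pair hgen fun hba => hab (le_antisymm hle hba)⟩
  · exact ⟨a, isAtomOf_of_generatesLat_pair hgen hle⟩

lemma not_isAtomOf_of_infinite_Iic {a : L} (h : (Set.Iic a).Infinite) : ¬ IsAtomOf a := by
  rintro ⟨x, y, -, hxy⟩
  exact h (hxy ▸ Set.toFinite _)

lemma not_isAtomOf_bot [OrderBot L] : ¬ IsAtomOf (⊥ : L) := by
  rintro ⟨x, y, hxy, h⟩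
  rw [Set.Iic_bot] at h
  exact hxy ((h ▸ Set.subsingleton_singleton : ({x, y} : Set L).Subsingleton) (by simp) (by simp))

lemma exists_generatesLat_ncard_eq [Infinite L] {S : Set L} (hS : GeneratesLat S)
    (hfin : S.Finite) {n : ℕ} (hn : S.ncard ≤ n) : ∃ G : Set L, G.ncard = n ∧ GeneratesLat G := by
  obtain ⟨G, hSG, -, hG⟩ := Set.infinite_univ.exists_superset_ncard_eq (Set.subset_univ S) hfin hn
  exact ⟨G, hG, Set.eq_univ_of_univ_subset (hS ▸ latticeClosure_mono hSG)⟩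

end LatticeGeneration

/-- `arm i` lies on arm `i % 3`, lower for larger `i`; `join k = arm k ⊔ arm (k + 1)`. -/
inductive Spiral : Type
  | bot : Spiral
  | arm : ℕ → Spiral
  | join : ℕ → Spiral

namespace Spiral

def le : Spiral → Spiral → Prop
  | bot, _ => True
  | arm i, arm j => j ≤ i ∧ i % 3 = j % 3
  | arm i, join j => j ≤ i
  | join i, join j => j ≤ i
  | _, _ => False

/-- The least `j ≥ max i k` with `j ≡ i [MOD 3]`. -/
def armBelow (i k : ℕ) : ℕ := if k ≤ i then i else k + (i % 3 + 3 - k % 3) % 3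

def sup : Spiral → Spiral → Spiral
  | bot, x => x
  | x, bot => x
  | arm i, arm j => if i % 3 = j % 3 then arm (min i j) else join (min i j)
  | arm i, join j | join i, arm j | join i, join j => join (min i j)

def inf : Spiral → Spiral → Spiral
  | bot, _ | _, bot => bot
  | arm i, arm j => if i % 3 = j % 3 then arm (max i j) else bot
  | arm i, join j => arm (armBelow i j)
  | join i, arm j => arm (armBelow j i)
  | join i, join j => join (max i j)

instance : Lattice Spiral where
  le := le
  le_refl a := by cases a <;> grind [le]
  le_trans a b c := by cases a <;> cases b <;> cases c <;> grind [le]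
  le_antisymm a b := by cases a <;> cases b <;> grind [le]
  sup := sup
  le_sup_left a b := by cases a <;> cases b <;> grind [le, sup]
  le_sup_right a b := by cases a <;> cases b <;> grind [le, sup]
  sup_le a b c := by cases a <;> cases b <;> cases c <;> grind [le, sup]
  inf := inf
  inf_le_left a b := by cases a <;> cases b <;> grind [le, inf, armBelow]
  inf_le_right a b := by cases a <;> cases b <;> grind [le, inf, armBelow]
  le_inf a b c := by cases a <;> cases b <;> cases c <;> grind [le, inf, armBelow]

instance : OrderBot Spiral where
  bot := bot
  bot_le _ := trivial

instance : Infinite Spiral := .of_injective arm fun _ _ => arm.inj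

lemma arm_le_arm_iff {i j : ℕ} : arm i ≤ arm j ↔ j ≤ i ∧ i % 3 = j % 3 := Iff.rfl

lemma arm_le_join (k : ℕ) : arm k ≤ join k := le_refl k

lemma arm_sup_arm_succ (k : ℕ) : arm k ⊔ arm (k + 1) = join k := by
  change ite _ _ _ = _
  grind

lemma arm_inf_arm_succ (k : ℕ) : arm k ⊓ arm (k + 1) = bot := by
  change ite _ _ _ = _
  grind

lemma arm_inf_join_succ (i : ℕ) : arm i ⊓ join (i + 1) = arm (i + 3) := by
  change arm (armBelow i (i + 1)) = _
  grind [armBelow]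

lemma arm_add_three (i : ℕ) : arm (i + 3) = arm i ⊓ (arm (i + 1) ⊔ arm (i + 2)) := by
  rw [arm_sup_arm_succ, arm_inf_join_succ]

lemma arm_mem_latticeClosure (i : ℕ) : arm i ∈ latticeClosure {arm 0, arm 1, arm 2} := by
  induction i using Nat.strong_induction_on with
  | _ i ih =>
    match i with
    | 0 | 1 | 2 => exact subset_latticeClosure (by simp)
    | i + 3 =>
      rw [arm_add_three]
      exact isSublattice_latticeClosure.infClosed (ih i (by omega))
        (isSublattice_latticeClosure.supClosed (ih (i + 1) (by omega)) (ih (i + 2) (by omega)))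

lemma generatesLat_arms : GeneratesLat {arm 0, arm 1, arm 2} := by
  have hclosed := isSublattice_latticeClosure (s := {arm 0, arm 1, arm 2})
  refine Set.eq_univ_of_forall fun x => ?_
  cases x with
  | bot =>
    rw [← arm_inf_arm_succ 0]
    exact hclosed.infClosed (arm_mem_latticeClosure 0) (arm_mem_latticeClosure 1)
  | arm i => exact arm_mem_latticeClosure i
  | join k =>
    rw [← arm_sup_arm_succ]
    exact hclosed.supClosed (arm_mem_latticeClosure k) (arm_mem_latticeClosure (k + 1))

lemma ncard_arms : ({arm 0, arm 1, arm 2} : Set Spiral).ncard = 3 :=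
  Set.ncard_eq_three.mpr ⟨_, _, _, by simp, by simp, by simp, rfl⟩

lemma infinite_Iic_arm (i : ℕ) : (Set.Iic (arm i)).Infinite :=
  Set.infinite_of_injective_forall_mem (f := fun k => arm (i + 3 * k))
    (fun _ _ h => by simpa using arm.inj h) fun _ => arm_le_arm_iff.mpr (by omega)

lemma not_isAtomOf (x : Spiral) : ¬ IsAtomOf x := by
  cases x with
  | bot => exact not_isAtomOf_bot
  | arm i => exact not_isAtomOf_of_infinite_Iic (infinite_Iic_arm i)
  | join k =>
    exact not_isAtomOf_of_infinite_Iic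
      ((infinite_Iic_arm k).mono (Set.Iic_subset_Iic.mpr (arm_le_join k)))

end Spiral

theorem stmt_2 (n : ℕ) (hn : 2 ≤ n) :
    (∃ (L : Type) (_ : Lattice L) (G : Set L),
        G.ncard = n ∧ GeneratesLat G ∧
        (∀ a : L, ¬ IsAtomOf a)) ↔ 3 ≤ n := by
  constructor
  · rintro ⟨L, _, G, hcard, hgen, hatom⟩
    by_contra! hlt
    obtain ⟨a, b, hab, rfl⟩ := Set.ncard_eq_two.mp (show G.ncard = 2 by omega)
    obtain ⟨c, hc⟩ := exists_isAtomOf_of_generatesLat_pair hab hgen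
    exact hatom c hc
  · intro h3
    obtain ⟨G, hcard, hgen⟩ := exists_generatesLat_ncard_eq Spiral.generatesLat_arms
      (Set.toFinite _) (Spiral.ncard_arms.trans_le h3)
    exact ⟨Spiral, inferInstance, G, hcard, hgen, Spiral.not_isAtomOf⟩
end

section
/- If a lattice L is generated by a three-element subset {a₀, a₁, a₂} and L has no coatom, then L has at least one atom. -/
/-- `a` is a coatom of the lattice `L`: the principal filter `↑a` has exactly two elements. -/
def IsCoatomOf {L : Type*} [Lattice L] (a : L) : Prop := TwoElem (Set.Ici a)

/-! Every element of the lattice generated by `{a, b, c}` lies below `a ⊔ b` or above `c`, and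
below `c` or above `a ⊓ b`, because the union of a principal ideal and a principal filter is a
sublattice. Hence a pairwise meet of generators other than the bottom `a ⊓ b ⊓ c` is an atom, and
a pairwise join other than the top `a ⊔ b ⊔ c` is a coatom. Without coatoms and atoms the
generators would thus be pairwise complements, so the lattice would be `{⊥, a, b, c, ⊤}`, in
which each of the three distinct generators is an atom. -/

open Set

section Sublattices

variable {L : Type*} [Lattice L]

theorem isSublattice_Icc (p q : L) : IsSublattice (Icc p q) where
  supClosed _ hx _ hy := ⟨le_sup_of_le_left hx.1, sup_le hx.2 hy.2⟩
  infClosed _ hx _ hy := ⟨le_inf hx.1 hy.1, inf_le_of_left_le hx.2⟩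

theorem isSublattice_Iic_union_Ici (p q : L) : IsSublattice (Iic p ∪ Ici q) where
  supClosed := by
    rintro x (hx | hx) y (hy | hy)
    · exact Or.inl (sup_le hx hy)
    · exact Or.inr (le_sup_of_le_right hy)
    · exact Or.inr (le_sup_of_le_left hx)
    · exact Or.inr (le_sup_of_le_left hx)
  infClosed := by
    rintro x (hx | hx) y (hy | hy)
    · exact Or.inl (inf_le_of_left_le hx)
    · exact Or.inl (inf_le_of_left_le hx)
    · exact Or.inl (inf_le_of_right_le hy)
    · exact Or.inr (le_inf hx hy)

theorem isSublattice_insert_bot_insert_top [BoundedOrder L] {G : Set L}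
    (hG : G.Pairwise IsCompl) : IsSublattice (insert ⊥ (insert ⊤ G)) where
  supClosed := by
    rintro x (rfl | rfl | hx) y hy
    · simpa using hy
    · simp
    · rcases hy with rfl | rfl | hy
      · simp [hx]
      · simp
      · obtain rfl | hxy := eq_or_ne x y
        · simp [hx]
        · simp [(hG hx hy hxy).sup_eq_top]
  infClosed := by
    rintro x (rfl | rfl | hx) y hy
    · simp
    · simpa using hy
    · rcases hy with rfl | rfl | hy
      · simp
      · simp [hx]
      · obtain rfl | hxy := eq_or_ne x y
        · simp [hx]
        · simp [(hG hx hy hxy).inf_eq_bot]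

end Sublattices

section ThreeGenerators

variable {L : Type*} [Lattice L] {u v w x : L}

theorem mem_Icc_of_mem_latticeClosure (hx : x ∈ latticeClosure {u, v, w}) :
    x ∈ Icc (u ⊓ v ⊓ w) (u ⊔ v ⊔ w) := by
  refine latticeClosure_min ?_ (isSublattice_Icc _ _) hx
  simp only [insert_subset_iff, singleton_subset_iff, mem_Icc]
  exact ⟨⟨inf_le_left.trans inf_le_left, le_sup_left.trans le_sup_left⟩,
    ⟨inf_le_left.trans inf_le_right, le_sup_right.trans le_sup_left⟩, inf_le_right, le_sup_right⟩

theorem le_sup_or_le_of_mem_latticeClosure (hx : x ∈ latticeClosure {u, v, w}) :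
    x ≤ u ⊔ v ∨ w ≤ x := by
  refine latticeClosure_min ?_ (isSublattice_Iic_union_Ici _ _) hx
  simp [insert_subset_iff]

theorem le_or_inf_le_of_mem_latticeClosure (hx : x ∈ latticeClosure {u, v, w}) :
    x ≤ w ∨ u ⊓ v ≤ x := by
  refine latticeClosure_min ?_ (isSublattice_Iic_union_Ici _ _) hx
  simp [insert_subset_iff]

abbrev boundedOrderOfLatticeClosureEqUniv (hgen : latticeClosure {u, v, w} = univ) :
    BoundedOrder L where
  top := u ⊔ v ⊔ w
  le_top x := (mem_Icc_of_mem_latticeClosure (hgen ▸ mem_univ x)).2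
  bot := u ⊓ v ⊓ w
  bot_le x := (mem_Icc_of_mem_latticeClosure (hgen ▸ mem_univ x)).1

theorem isAtom_inf_of_latticeClosure_eq_univ [OrderBot L]
    (hgen : latticeClosure {u, v, w} = univ) (h : u ⊓ v ≠ ⊥) : IsAtom (u ⊓ v) := by
  refine ⟨h, fun x hx => le_bot_iff.1 ?_⟩
  have hxw : x ≤ w :=
    (le_or_inf_le_of_mem_latticeClosure (hgen ▸ mem_univ x)).resolve_right hx.not_ge
  calc x ≤ u ⊓ v ⊓ w := le_inf hx.le hxw
    _ ≤ ⊥ := (mem_Icc_of_mem_latticeClosure (hgen ▸ mem_univ ⊥)).1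

theorem isCoatom_sup_of_latticeClosure_eq_univ [OrderTop L]
    (hgen : latticeClosure {u, v, w} = univ) (h : u ⊔ v ≠ ⊤) : IsCoatom (u ⊔ v) := by
  refine ⟨h, fun x hx => top_le_iff.1 ?_⟩
  have hwx : w ≤ x :=
    (le_sup_or_le_of_mem_latticeClosure (hgen ▸ mem_univ x)).resolve_left hx.not_ge
  calc ⊤ ≤ u ⊔ v ⊔ w := (mem_Icc_of_mem_latticeClosure (hgen ▸ mem_univ ⊤)).2
    _ ≤ x := sup_le hx.le hwx

end ThreeGenerators

theorem isAtom_of_pairwise_isCompl {L : Type*} [Lattice L] [BoundedOrder L] {G : Set L} {a : L}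
    (hgen : latticeClosure G = univ) (hG : G.Pairwise IsCompl) (ha : a ∈ G) (ha_ne : a ≠ ⊥) :
    IsAtom a := by
  refine ⟨ha_ne, fun x hxa => ?_⟩
  have hx : x ∈ insert ⊥ (insert ⊤ G) :=
    latticeClosure_min ((subset_insert _ _).trans (subset_insert _ _))
      (isSublattice_insert_bot_insert_top hG) (hgen ▸ mem_univ x)
  rcases hx with rfl | rfl | hxG
  · rfl
  · exact absurd hxa not_top_lt
  · rw [← inf_eq_left.2 hxa.le, (hG hxG ha hxa.ne).inf_eq_bot]

theorem exists_isAtom_of_latticeClosure_eq_univ {L : Type*} [Lattice L] [BoundedOrder L]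
    {a b c : L} (hab : a ≠ b) (hac : a ≠ c) (hbc : b ≠ c)
    (hgen : latticeClosure {a, b, c} = univ) (hcoatom : ∀ x : L, ¬IsCoatom x) :
    ∃ x : L, IsAtom x := by
  by_contra! hatom
  have hcompl {u v w : L} (h : latticeClosure {u, v, w} = univ) : IsCompl u v :=
    .of_eq (not_not.1 fun hne => hatom _ (isAtom_inf_of_latticeClosure_eq_univ h hne))
      (not_not.1 fun hne => hcoatom _ (isCoatom_sup_of_latticeClosure_eq_univ h hne))
  have hab' : IsCompl a b := hcompl hgen
  have hac' : IsCompl a c := hcompl (w := b) (by rwa [pair_comm b c] at hgen)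
  have hbc' : IsCompl b c := hcompl (w := a) (by rwa [insert_comm a b, pair_comm a c] at hgen)
  have hG : ({a, b, c} : Set L).Pairwise IsCompl := by
    simp [pairwise_insert, hab', hac', hbc', hab'.symm, hac'.symm, hbc'.symm]
  have ha : a ≠ ⊥ := by
    rintro rfl
    exact hbc ((eq_top_of_bot_isCompl hab').trans (eq_top_of_bot_isCompl hac').symm)
  exact hatom a (isAtom_of_pairwise_isCompl hgen hG (mem_insert a _) ha)

theorem IsAtom.isAtomOf {L : Type*} [Lattice L] [OrderBot L] {a : L} (h : IsAtom a) :
    IsAtomOf a :=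
  ⟨⊥, a, h.1.symm, h.Iic_eq⟩

theorem IsCoatom.isCoatomOf {L : Type*} [Lattice L] [OrderTop L] {a : L} (h : IsCoatom a) :
    IsCoatomOf a :=
  ⟨⊤, a, h.1.symm, h.Ici_eq⟩

theorem stmt_3 {L : Type*} [Lattice L] (a₀ a₁ a₂ : L)
    (hthree : ({a₀, a₁, a₂} : Set L).ncard = 3)
    (hgen : GeneratesLat ({a₀, a₁, a₂} : Set L))
    (hnocoatom : ∀ x : L, ¬ IsCoatomOf x) :
    ∃ x : L, IsAtomOf x := by
  obtain ⟨a, b, c, hab, hac, hbc, habc⟩ := ncard_eq_three.1 hthree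
  rw [GeneratesLat, habc] at hgen
  let _ := boundedOrderOfLatticeClosureEqUniv hgen
  obtain ⟨x, hx⟩ := exists_isAtom_of_latticeClosure_eq_univ hab hac hbc hgen
    fun x hx => hnocoatom x hx.isCoatomOf
  exact ⟨x, hx.isAtomOf⟩
end

section
/- Let L be a lattice generated by a three-element subset {a₀, a₁, a₂}, and let k be the number of pairs (i,j) with (i,j) ∈ {(0,1), (0,2), (1,2)} such that aᵢ ∧ aⱼ ≠ a₀ ∧ a₁ ∧ a₂. If k ∈ {2, 3}, then L has exactly k atoms. -/
/-!
Let `m = a₀ ⊓ a₁ ⊓ a₂`. Since the set of upper bounds of `m` is a sublattice containing the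
generators, `m` is the least element of `L`. For any `u, v` the set `{x | u ≤ x ∨ x ≤ v}` is a
sublattice; for `{i, j, l} = {0, 1, 2}`, `u = aᵢ ⊓ aⱼ` and `v = aₗ` it contains the generators,
so every `x` lies above `aᵢ ⊓ aⱼ` or below `aₗ`. Hence only `m` lies strictly below `aᵢ ⊓ aⱼ`,
so each pairwise meet different from `m` is an atom, and two different pairs cannot have the
same meet without it lying below all three generators. Conversely, if two pairs have meets
different from `m`, an atom `w` lies above one of them (and equals it) or lies below the two
remaining generators, hence below their meet, which must then be `w`.
-/

section

variable {L : Type*} [Lattice L] {G : Set L}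

theorem isSublattice_setOf_le_or_le (u v : L) : IsSublattice {x | u ≤ x ∨ x ≤ v} where
  supClosed := by
    rintro x (hx | hx) y hy
    · exact Or.inl (le_sup_of_le_left hx)
    · rcases hy with hy | hy
      · exact Or.inl (le_sup_of_le_right hy)
      · exact Or.inr (sup_le hx hy)
  infClosed := by
    rintro x (hx | hx) y hy
    · rcases hy with hy | hy
      · exact Or.inl (le_inf hx hy)
      · exact Or.inr (inf_le_of_right_le hy)
    · exact Or.inr (inf_le_of_left_le hx)

namespace GeneratesLat

theorem mem_of_isSublattice (hgen : GeneratesLat G) {t : Set L} (hGt : G ⊆ t)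
    (ht : IsSublattice t) (x : L) : x ∈ t :=
  latticeClosure_min hGt ht (hgen ▸ Set.mem_univ x)

theorem isBot_of_mem_lowerBounds (hgen : GeneratesLat G) {m : L} (hm : m ∈ lowerBounds G) :
    IsBot m :=
  hgen.mem_of_isSublattice (t := Set.Ici m) hm
    ⟨fun _ hx _ _ => le_sup_of_le_left hx, fun _ hx _ hy => le_inf hx hy⟩

theorem le_or_le (hgen : GeneratesLat G) {u v : L} (h : ∀ g ∈ G, u ≤ g ∨ g ≤ v) (x : L) :
    u ≤ x ∨ x ≤ v :=
  hgen.mem_of_isSublattice h (isSublattice_setOf_le_or_le u v) x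

end GeneratesLat

theorem isAtomOf_iff {m x : L} (hm : IsBot m) :
    IsAtomOf x ↔ x ≠ m ∧ ∀ z ≤ x, z = m ∨ z = x := by
  constructor
  · rintro ⟨p, q, hpq, hIic⟩
    have hcard : (Set.Iic x).ncard = 2 := hIic ▸ Set.ncard_pair hpq
    have hxm : x ≠ m := by
      rintro rfl
      simp [hm.isMin.Iic_eq] at hcard
    have hIic' : ({m, x} : Set L) = Set.Iic x :=
      Set.eq_of_subset_of_ncard_le (Set.insert_subset (hm x) (Set.singleton_subset_iff.2 le_rfl))
        (by rw [hcard, Set.ncard_pair hxm.symm]) (hIic ▸ Set.toFinite _)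
    exact ⟨hxm, fun z hz => show z ∈ ({m, x} : Set L) from hIic' ▸ hz⟩
  · rintro ⟨hxm, hbelow⟩
    refine ⟨x, m, hxm, Set.ext fun z => ⟨fun hz => (hbelow z hz).symm, ?_⟩⟩
    rintro (rfl | rfl)
    exacts [le_rfl, hm x]

end

def indexPairs : Set (Fin 3 × Fin 3) := {(0, 1), (0, 2), (1, 2)}

/-- For `i ≠ j` in `Fin 3`, `-(i + j)` is the remaining index. -/
def thirdIndex (p : Fin 3 × Fin 3) : Fin 3 := -(p.1 + p.2)

theorem eq_or_eq_or_eq_thirdIndex {p : Fin 3 × Fin 3} (hp : p ∈ indexPairs) (t : Fin 3) :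
    t = p.1 ∨ t = p.2 ∨ t = thirdIndex p := by
  simp only [indexPairs, Set.mem_insert_iff, Set.mem_singleton_iff] at hp
  rcases hp with rfl | rfl | rfl <;> revert t <;> decide

theorem eq_or_eq_or_eq_or_eq_of_ne {p q : Fin 3 × Fin 3} (hp : p ∈ indexPairs)
    (hq : q ∈ indexPairs) (hpq : p ≠ q) (t : Fin 3) :
    t = p.1 ∨ t = p.2 ∨ t = q.1 ∨ t = q.2 := by
  simp only [indexPairs, Set.mem_insert_iff, Set.mem_singleton_iff] at hp hq
  rcases hp with rfl | rfl | rfl <;> rcases hq with rfl | rfl | rfl <;>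
    first | exact absurd rfl hpq | revert t; decide

theorem exists_indexPairs_thirdIndex {p q : Fin 3 × Fin 3} (hp : p ∈ indexPairs)
    (hq : q ∈ indexPairs) (hpq : p ≠ q) :
    ∃ r ∈ indexPairs, (r.1 = thirdIndex p ∧ r.2 = thirdIndex q) ∨
      (r.1 = thirdIndex q ∧ r.2 = thirdIndex p) := by
  simp only [indexPairs, Set.mem_insert_iff, Set.mem_singleton_iff] at hp hq ⊢
  rcases hp with rfl | rfl | rfl <;> rcases hq with rfl | rfl | rfl <;>
    first | exact absurd rfl hpq | decide

section ThreeGenerators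

variable {L : Type*} [Lattice L]

def nontrivialPairs (a : Fin 3 → L) : Set (Fin 3 × Fin 3) :=
  {p | p ∈ indexPairs ∧ a p.1 ⊓ a p.2 ≠ a 0 ⊓ a 1 ⊓ a 2}

variable {a : Fin 3 → L}

theorem isBot_inf_inf (hgen : GeneratesLat (Set.range a)) : IsBot (a 0 ⊓ a 1 ⊓ a 2) := by
  refine hgen.isBot_of_mem_lowerBounds ?_
  rintro _ ⟨t, rfl⟩
  fin_cases t
  exacts [inf_le_left.trans inf_le_left, inf_le_left.trans inf_le_right, inf_le_right]

theorem eq_inf_inf_of_forall_le (hgen : GeneratesLat (Set.range a)) {w : L}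
    (hw : ∀ t, w ≤ a t) : w = a 0 ⊓ a 1 ⊓ a 2 :=
  le_antisymm (le_inf (le_inf (hw 0) (hw 1)) (hw 2)) (isBot_inf_inf hgen w)

theorem inf_le_or_le_thirdIndex (hgen : GeneratesLat (Set.range a)) {p : Fin 3 × Fin 3}
    (hp : p ∈ indexPairs) (x : L) : a p.1 ⊓ a p.2 ≤ x ∨ x ≤ a (thirdIndex p) := by
  refine hgen.le_or_le ?_ x
  rintro _ ⟨t, rfl⟩
  rcases eq_or_eq_or_eq_thirdIndex hp t with rfl | rfl | rfl
  exacts [Or.inl inf_le_left, Or.inl inf_le_right, Or.inr le_rfl]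

theorem eq_or_eq_of_le_inf (hgen : GeneratesLat (Set.range a)) {p : Fin 3 × Fin 3}
    (hp : p ∈ indexPairs) {z : L} (hz : z ≤ a p.1 ⊓ a p.2) :
    z = a 0 ⊓ a 1 ⊓ a 2 ∨ z = a p.1 ⊓ a p.2 := by
  rcases inf_le_or_le_thirdIndex hgen hp z with h | h
  · exact Or.inr (le_antisymm hz h)
  · refine Or.inl (eq_inf_inf_of_forall_le hgen fun t => ?_)
    rcases eq_or_eq_or_eq_thirdIndex hp t with rfl | rfl | rfl
    exacts [hz.trans inf_le_left, hz.trans inf_le_right, h]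

theorem isAtomOf_inf_of_mem_nontrivialPairs (hgen : GeneratesLat (Set.range a))
    {p : Fin 3 × Fin 3} (hp : p ∈ nontrivialPairs a) : IsAtomOf (a p.1 ⊓ a p.2) :=
  (isAtomOf_iff (isBot_inf_inf hgen)).2 ⟨hp.2, fun _ hz => eq_or_eq_of_le_inf hgen hp.1 hz⟩

theorem injOn_inf_nontrivialPairs (hgen : GeneratesLat (Set.range a)) :
    Set.InjOn (fun p => a p.1 ⊓ a p.2) (nontrivialPairs a) := by
  intro p hp q hq (he : a p.1 ⊓ a p.2 = a q.1 ⊓ a q.2)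
  by_contra hpq
  refine hp.2 (eq_inf_inf_of_forall_le hgen fun t => ?_)
  rcases eq_or_eq_or_eq_or_eq_of_ne hp.1 hq.1 hpq t with rfl | rfl | rfl | rfl
  exacts [inf_le_left, inf_le_right, he ▸ inf_le_left, he ▸ inf_le_right]

theorem exists_mem_nontrivialPairs_of_isAtomOf (hgen : GeneratesLat (Set.range a))
    {p q : Fin 3 × Fin 3} (hp : p ∈ nontrivialPairs a) (hq : q ∈ nontrivialPairs a)
    (hpq : p ≠ q) {w : L} (hw : IsAtomOf w) :
    ∃ r ∈ nontrivialPairs a, a r.1 ⊓ a r.2 = w := by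
  obtain ⟨hwm, hbelow⟩ := (isAtomOf_iff (isBot_inf_inf hgen)).1 hw
  have of_le : ∀ r ∈ nontrivialPairs a, a r.1 ⊓ a r.2 ≤ w →
      ∃ r ∈ nontrivialPairs a, a r.1 ⊓ a r.2 = w :=
    fun r hr h => ⟨r, hr, (hbelow _ h).resolve_left hr.2⟩
  rcases inf_le_or_le_thirdIndex hgen hp.1 w with h | hwp
  · exact of_le p hp h
  rcases inf_le_or_le_thirdIndex hgen hq.1 w with h | hwq
  · exact of_le q hq h
  obtain ⟨r, hr, hthird⟩ := exists_indexPairs_thirdIndex hp.1 hq.1 hpq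
  have hwr : w ≤ a r.1 ⊓ a r.2 := by
    rcases hthird with ⟨h1, h2⟩ | ⟨h1, h2⟩ <;> rw [h1, h2]
    exacts [le_inf hwp hwq, le_inf hwq hwp]
  rcases eq_or_eq_of_le_inf hgen hr hwr with h | h
  · exact absurd h hwm
  · exact ⟨r, ⟨hr, h ▸ hwm⟩, h.symm⟩

theorem setOf_isAtomOf_eq_image (hgen : GeneratesLat (Set.range a))
    (htwo : 1 < (nontrivialPairs a).ncard) :
    {x | IsAtomOf x} = (fun p => a p.1 ⊓ a p.2) '' nontrivialPairs a := by
  obtain ⟨p, hp, q, hq, hpq⟩ := (Set.one_lt_ncard (Set.toFinite _)).1 htwo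
  ext w
  constructor
  · exact fun hw => exists_mem_nontrivialPairs_of_isAtomOf hgen hp hq hpq hw
  · rintro ⟨r, hr, rfl⟩
    exact isAtomOf_inf_of_mem_nontrivialPairs hgen hr

end ThreeGenerators

theorem stmt_4_general {L : Type*} [Lattice L] (a : Fin 3 → L)
    (hgen : GeneratesLat (Set.range a))
    (k : ℕ)
    (hk : k = {p : Fin 3 × Fin 3 |
        p ∈ ({(0, 1), (0, 2), (1, 2)} : Set (Fin 3 × Fin 3)) ∧
        a p.1 ⊓ a p.2 ≠ a 0 ⊓ a 1 ⊓ a 2}.ncard)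
    (hk23 : k = 2 ∨ k = 3) :
    {x : L | IsAtomOf x}.ncard = k := by
  change k = (nontrivialPairs a).ncard at hk
  rw [setOf_isAtomOf_eq_image hgen (by omega),
    (injOn_inf_nontrivialPairs hgen).ncard_image, hk]

theorem stmt_4 {L : Type*} [Lattice L] (a : Fin 3 → L)
    (hthree : (Set.range a).ncard = 3)
    (hgen : GeneratesLat (Set.range a))
    (k : ℕ)
    (hk : k = {p : Fin 3 × Fin 3 |
        p ∈ ({(0, 1), (0, 2), (1, 2)} : Set (Fin 3 × Fin 3)) ∧
        a p.1 ⊓ a p.2 ≠ a 0 ⊓ a 1 ⊓ a 2}.ncard)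
    (hk23 : k = 2 ∨ k = 3) :
    {x : L | IsAtomOf x}.ncard = k :=
  stmt_4_general a hgen k hk hk23
end

section
/- Let L be a lattice generated by a three-element subset {a₁, a₂, a₃}, and let {i, j, k} = {1, 2, 3}. If aᵢ ∨ aⱼ ≠ a₁ ∨ a₂ ∨ a₃, then L is the disjoint union of the principal ideal ↓(aᵢ ∨ aⱼ) and the principal filter ↑aₖ, and aᵢ ∨ aⱼ is a coatom of L. -/
/-!
In any lattice `↓m ∪ ↑d` is a sublattice: a join with an element of `↑d` stays in `↑d`, and a meet
with an element of `↓m` stays in `↓m`. For `m = b ⊔ c` it contains the generators `b, c, d`, so it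
is all of `L`; likewise every element lies below `m ⊔ d`. Hence an `x ≥ m` is either `m` or lies
above `d`, and then `x = m ⊔ d`. The hypothesis `m ≠ b ⊔ c ⊔ d` says exactly that `d ≰ m`, which
makes the union disjoint and the two elements of `↑m` distinct.
-/

open Set

section

variable {L : Type*} [Lattice L]

lemma isSublattice_Iic (t : L) : IsSublattice (Iic t) :=
  ⟨fun _ hx _ hy ↦ sup_le hx hy, fun _ hx _ _ ↦ inf_le_left.trans hx⟩

lemma isSublattice_Iic_union_Ici_s8 (m d : L) : IsSublattice (Iic m ∪ Ici d) := by
  constructor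
  · rintro x (hx | hx) y (hy | hy)
    · exact .inl (sup_le hx hy)
    · exact .inr (hy.trans le_sup_right)
    · exact .inr (hx.trans le_sup_left)
    · exact .inr (hx.trans le_sup_left)
  · rintro x (hx | hx) y (hy | hy)
    · exact .inl (inf_le_left.trans hx)
    · exact .inl (inf_le_left.trans hx)
    · exact .inl (inf_le_right.trans hy)
    · exact .inr (le_inf hx hy)

lemma isCoatomOf_of_Iic_union_Ici_eq_univ {m d : L} (hcover : Iic m ∪ Ici d = univ)
    (htop : ∀ x, x ≤ m ⊔ d) (hd : ¬ d ≤ m) : IsCoatomOf m := by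
  refine ⟨m, m ⊔ d, fun h ↦ hd (left_eq_sup.1 h), Subset.antisymm ?_ ?_⟩
  · intro x hmx
    rcases hcover.symm ▸ mem_univ x with hxm | hdx
    · exact .inl (le_antisymm hxm hmx)
    · exact .inr (le_antisymm (htop x) (sup_le hmx hdx))
  · rintro x (rfl | rfl)
    · exact le_rfl
    · exact le_sup_left

namespace GeneratesLat

lemma eq_univ_of_subset {G S : Set L} (hG : GeneratesLat G) (hGS : G ⊆ S)
    (hS : IsSublattice S) : S = univ :=
  univ_subset_iff.1 (hG ▸ latticeClosure_min hGS hS)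

lemma le_of_subset_Iic {G : Set L} (hG : GeneratesLat G) {t : L} (hGt : G ⊆ Iic t) (x : L) :
    x ≤ t :=
  eq_univ_iff_forall.1 (hG.eq_univ_of_subset hGt (isSublattice_Iic t)) x

variable {b c d : L}

lemma Iic_sup_union_Ici_eq_univ (hG : GeneratesLat {b, c, d}) :
    Iic (b ⊔ c) ∪ Ici d = univ :=
  hG.eq_univ_of_subset (by simp [insert_subset_iff]) (isSublattice_Iic_union_Ici_s8 _ _)

lemma isCoatomOf_sup (hG : GeneratesLat {b, c, d}) (hd : ¬ d ≤ b ⊔ c) : IsCoatomOf (b ⊔ c) :=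
  isCoatomOf_of_Iic_union_Ici_eq_univ hG.Iic_sup_union_Ici_eq_univ
    (hG.le_of_subset_Iic (by simp [insert_subset_iff, le_sup_of_le_left])) hd

end GeneratesLat

end

theorem stmt_8_general {L : Type*} [Lattice L] (a : Fin 3 → L)
    (hgen : GeneratesLat (Set.range a))
    (i j k : Fin 3) (hijk : ({i, j, k} : Set (Fin 3)) = Set.univ)
    (hne : a i ⊔ a j ≠ a 0 ⊔ a 1 ⊔ a 2) :
    Set.Iic (a i ⊔ a j) ∪ Set.Ici (a k) = Set.univ ∧
      Disjoint (Set.Iic (a i ⊔ a j)) (Set.Ici (a k)) ∧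
      IsCoatomOf (a i ⊔ a j) := by
  rw [← image_univ, ← hijk, image_insert_eq, image_pair] at hgen
  have hle_top (t : Fin 3) : a t ≤ a 0 ⊔ a 1 ⊔ a 2 := by
    fin_cases t
    exacts [le_sup_of_le_left le_sup_left, le_sup_of_le_left le_sup_right, le_sup_right]
  have hk : ¬ a k ≤ a i ⊔ a j := fun hk ↦
    hne <| le_antisymm (sup_le (hle_top i) (hle_top j))
      (hgen.le_of_subset_Iic (by simp [insert_subset_iff, hk]) _)
  exact ⟨hgen.Iic_sup_union_Ici_eq_univ, Iic_disjoint_Ici.2 hk, hgen.isCoatomOf_sup hk⟩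

theorem stmt_8 {L : Type*} [Lattice L] (a : Fin 3 → L)
    (hthree : (Set.range a).ncard = 3)
    (hgen : GeneratesLat (Set.range a))
    (i j k : Fin 3) (hijk : ({i, j, k} : Set (Fin 3)) = Set.univ)
    (hne : a i ⊔ a j ≠ a 0 ⊔ a 1 ⊔ a 2) :
    Set.Iic (a i ⊔ a j) ∪ Set.Ici (a k) = Set.univ ∧
      Disjoint (Set.Iic (a i ⊔ a j)) (Set.Ici (a k)) ∧
      IsCoatomOf (a i ⊔ a j) :=
  stmt_8_general a hgen i j k hijk hne
end

section
/- Let M be a lattice generated by a finite set {a₁, …, aₙ}, and let U = (uᵢⱼ) be an n-by-m matrix of elements of {a₁, …, aₙ} such that every column of U contains every element of {a₁, …, aₙ}, i.e., for every j ∈ {1, …, m}, {u₁ⱼ, …, uₙⱼ} = {a₁, …, aₙ}. For i ∈ {1, …, n}, let u⃗ᵢ = (u_{i1}, …, u_{im}) denote the i-th row of U, regarded as an element of the direct power Mᵐ. Let L be the sublattice of Mᵐ generated by {u⃗₁, …, u⃗ₙ}, and let x⃗ = (x₁, …, xₘ) be an atom of L. Then for every coordinate i ∈ {1, …, m}: if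 xᵢ is not the least element of M (i.e., not a₁ ∧ … ∧ aₙ), then xᵢ is an atom of M. -/
open Set

lemma TwoElem.eq_pair_of_isLeast_of_isGreatest {α : Type*} [PartialOrder α] {s : Set α}
    {z x : α} (h : TwoElem s) (hz : IsLeast s z) (hx : IsGreatest s x) : s = {z, x} := by
  obtain ⟨p, q, hpq, rfl⟩ := h
  have hzp := hz.2 (mem_insert p {q})
  have hzq := hz.2 (mem_insert_of_mem p rfl)
  have hpx := hx.2 (mem_insert p {q})
  have hqx := hx.2 (mem_insert_of_mem p rfl)
  rcases hz.1 with rfl | rfl <;> rcases hx.1 with rfl | rfl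
  · exact absurd (le_antisymm hzq hqx) hpq
  · rfl
  · exact pair_comm _ _
  · exact absurd (le_antisymm hpx hzp) hpq

lemma Finset.inf'_univ_eq_of_range_eq {ι κ α : Type*} [Fintype ι] [Fintype κ]
    [SemilatticeInf α] {f : ι → α} {g : κ → α} (hf : (univ : Finset ι).Nonempty)
    (hg : (univ : Finset κ).Nonempty) (h : Set.range f = Set.range g) :
    univ.inf' hf f = univ.inf' hg g :=
  eq_of_forall_le_iff fun c => by
    have key : (∀ y ∈ Set.range f, c ≤ y) ↔ ∀ y ∈ Set.range g, c ≤ y := by rw [h]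
    simpa only [le_inf'_iff, mem_univ, true_implies, Set.forall_mem_range] using key

lemma isSublattice_Ici_s10 {α : Type*} [Lattice α] (z : α) : IsSublattice (Ici z) :=
  ⟨fun _ hp _ _ => le_sup_of_le_left hp, fun _ hp _ hq => le_inf hp hq⟩

lemma lowerBounds_latticeClosure {α : Type*} [Lattice α] (s : Set α) :
    lowerBounds (latticeClosure s) = lowerBounds s :=
  (lowerBounds_mono_set subset_latticeClosure).antisymm fun _ hz =>
    latticeClosure_min hz (isSublattice_Ici_s10 _)

lemma isLeast_inf'_latticeClosure_range {ι α : Type*} [Fintype ι] [Lattice α] (u : ι → α)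
    (hne : (Finset.univ : Finset ι).Nonempty) :
    IsLeast (latticeClosure (range u)) (Finset.univ.inf' hne u) := by
  refine ⟨isSublattice_latticeClosure.infClosed.finsetInf'_mem hne fun i _ =>
    subset_latticeClosure (mem_range_self i), ?_⟩
  rw [lowerBounds_latticeClosure]
  rintro _ ⟨i, rfl⟩
  exact Finset.inf'_le u (Finset.mem_univ i)

lemma exists_mem_latticeClosure_range_apply_eq {ι κ α : Type*} [Lattice α] {u : ι → κ → α}
    {j : κ} (hgen : GeneratesLat (range fun i => u i j)) (t : α) :
    ∃ y ∈ latticeClosure (range u), y j = t := by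
  have ht : t ∈ (fun y => y j) '' latticeClosure (range u) := by
    rw [image_latticeClosure _ _ (fun _ _ => rfl) (fun _ _ => rfl), ← range_comp]
    exact hgen ▸ mem_univ t
  exact ht

lemma Iic_apply_eq_pair {ι : Type*} {π : ι → Type*} [∀ i, Lattice (π i)]
    {L : Set (∀ i, π i)} (hL : InfClosed L) {x z : ∀ i, π i} (hx : x ∈ L)
    (hpair : {y | y ∈ L ∧ y ≤ x} = {z, x}) {j : ι} (hsurj : ∀ t, ∃ y ∈ L, y j = t) :
    Iic (x j) = {z j, x j} := by
  have hzx : z ≤ x := (hpair.symm ▸ mem_insert z {x} : z ∈ {y | y ∈ L ∧ y ≤ x}).2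
  refine subset_antisymm (fun t ht => ?_) (insert_subset (hzx j) (singleton_subset_iff.2 le_rfl))
  obtain ⟨y, hy, rfl⟩ := hsurj t
  have hyx : (y ⊓ x) j = y j := inf_eq_left.2 ht
  have hmem : y ⊓ x ∈ ({z, x} : Set (∀ i, π i)) := hpair ▸ ⟨hL hy hx, inf_le_right⟩
  rcases hmem with h | h
  · exact Or.inl (hyx ▸ congrFun h j)
  · exact Or.inr (hyx ▸ congrFun h j)

theorem stmt_10 {M : Type*} [Lattice M] {n m : ℕ} (hn : 0 < n)
    (a : Fin n → M)
    (hgen : GeneratesLat (Set.range a))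
    (u : Fin n → Fin m → M)
    -- every column of `u` contains every generator:
    (hcol : ∀ j : Fin m, Set.range (fun i : Fin n => u i j) = Set.range a)
    -- `x` is an atom of the sublattice `L` of `Mᵐ` generated by the rows of `u`,
    -- i.e. the principal ideal of `x` within `L` has exactly two elements:
    (x : Fin m → M)
    (hxL : x ∈ latticeClosure (Set.range u))
    (hatom : TwoElem {y : Fin m → M | y ∈ latticeClosure (Set.range u) ∧ y ≤ x}) :
    ∀ i : Fin m,
      x i ≠ (Finset.univ : Finset (Fin n)).inf' ⟨⟨0, hn⟩, Finset.mem_univ _⟩ a →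
      IsAtomOf (x i) := by
  intro j hj
  have hne : (Finset.univ : Finset (Fin n)).Nonempty := ⟨⟨0, hn⟩, Finset.mem_univ _⟩
  have hleast := isLeast_inf'_latticeClosure_range u hne
  have hzj : (Finset.univ.inf' hne u) j = Finset.univ.inf' hne a := by
    rw [Finset.inf'_apply]
    exact Finset.inf'_univ_eq_of_range_eq hne hne (hcol j)
  have hpair := hatom.eq_pair_of_isLeast_of_isGreatest
    ⟨⟨hleast.1, hleast.2 hxL⟩, fun _ hy => hleast.2 hy.1⟩ ⟨⟨hxL, le_rfl⟩, fun _ hy => hy.2⟩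
  refine ⟨_, _, hzj ▸ hj.symm, Iic_apply_eq_pair isSublattice_latticeClosure.infClosed hxL hpair ?_⟩
  exact exists_mem_latticeClosure_range_apply_eq ((hcol j).symm ▸ hgen)
end
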